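/- arXiv:2407.06528 — 2 statements merged into one kernel-verified Lean document; each statement's English description precedes it below -/
import Mathlib

section
/- For every α > 0, the mean-field operator 𝒯 is continuous on ℝ^T (with the sup norm), maps the cube [0,1]^T into itself, and admits at least one fixed point: there exists g* ∈ [0,1]^T with 𝒯(g*) = g*. -/
/-!
Backward induction along the recursion shows that `(g, e) ↦ Q^g_k(e, a)` is jointly continuous
and grows at most quadratically in `e`, locally uniformly in `g`: a Bellman step integrates the
translates `w ↦ h(g, e + w)` against `μ`, and the finite second moment of `μ` supplies an
integrable dominating function. As `σ_α` takes values in `[0, 1]`, dominated convergence then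
gives the continuity of `𝒯`, and `𝒯` maps all of `ℝ^T` into `[0, 1]^T`.

No Brouwer theorem is needed for the fixed point: `(𝒯 g)_k` depends only on `g_k, …, g_{T-1}`,
so the coordinates of a fixed point can be chosen one at a time, from `k = T - 1` down to `0`,
each by the intermediate value theorem in one variable.
-/

open MeasureTheory Matrix

/-- State–action value functions of the mean-field sensing problem, indexed by
time-to-go: `Qrev T lam A Γ μ g m e a = Q^g_{T-1-m}(e, a)`, defined by the backward
recursion `Q^g_k(e,a) = λ g_k a + ∫ [ e'ᵀ Γ_{k+1} e' + min_a' Q^g_{k+1}(e', a') ] dμ(w)`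
where `e' = (1-a) A e + w` and the terminal value `V^g_T ≡ 0`. -/
noncomputable def Qrev {n : ℕ} (T : ℕ) (lam : ℝ) (A : Matrix (Fin n) (Fin n) ℝ)
    (Γ : ℕ → Matrix (Fin n) (Fin n) ℝ) (μ : Measure (Fin n → ℝ)) (g : ℕ → ℝ) :
    ℕ → (Fin n → ℝ) → ℝ → ℝ
  | 0, e, a =>
      lam * g (T - 1) * a +
        ∫ w, ((1 - a) • (A *ᵥ e) + w) ⬝ᵥ ((Γ T) *ᵥ ((1 - a) • (A *ᵥ e) + w)) ∂μ
  | m + 1, e, a =>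
      lam * g (T - 1 - (m + 1)) * a +
        ∫ w,
          (((1 - a) • (A *ᵥ e) + w) ⬝ᵥ ((Γ (T - (m + 1))) *ᵥ ((1 - a) • (A *ᵥ e) + w)) +
            min (Qrev T lam A Γ μ g m ((1 - a) • (A *ᵥ e) + w) 0)
              (Qrev T lam A Γ μ g m ((1 - a) • (A *ᵥ e) + w) 1)) ∂μ

/-- `Qval T lam A Γ μ g k e a = Q^g_k(e,a)` for `0 ≤ k ≤ T-1`. -/
noncomputable def Qval {n : ℕ} (T : ℕ) (lam : ℝ) (A : Matrix (Fin n) (Fin n) ℝ)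
    (Γ : ℕ → Matrix (Fin n) (Fin n) ℝ) (μ : Measure (Fin n → ℝ)) (g : ℕ → ℝ)
    (k : ℕ) (e : Fin n → ℝ) (a : ℝ) : ℝ :=
  Qrev T lam A Γ μ g (T - 1 - k) e a

/-- Value of information `VoI^g_k(e) = Q^g_k(e,0) - Q^g_k(e,1)`. -/
noncomputable def VoI {n : ℕ} (T : ℕ) (lam : ℝ) (A : Matrix (Fin n) (Fin n) ℝ)
    (Γ : ℕ → Matrix (Fin n) (Fin n) ℝ) (μ : Measure (Fin n → ℝ)) (g : ℕ → ℝ)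
    (k : ℕ) (e : Fin n → ℝ) : ℝ :=
  Qval T lam A Γ μ g k e 0 - Qval T lam A Γ μ g k e 1

/-- Extension of a finite sequence `g ∈ ℝ^T` to `ℕ → ℝ` (by zero). -/
def extendSeq (T : ℕ) (g : Fin T → ℝ) : ℕ → ℝ :=
  fun j => if h : j < T then g ⟨j, h⟩ else 0

/-- The Boltzmann (logistic) function `σ_α(x) = 1/(1 + exp(-α x))`. -/
noncomputable def boltz (α x : ℝ) : ℝ := (1 + Real.exp (-α * x))⁻¹

/-- The mean-field operator `(𝒯 g)_k = ∫ σ_α(VoI^g_k(e)) dν_k(e)`. -/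
noncomputable def Tmf {n : ℕ} (T : ℕ) (lam α : ℝ) (A : Matrix (Fin n) (Fin n) ℝ)
    (Γ : ℕ → Matrix (Fin n) (Fin n) ℝ) (μ : Measure (Fin n → ℝ))
    (ν : Fin T → Measure (Fin n → ℝ)) (g : Fin T → ℝ) : Fin T → ℝ :=
  fun k => ∫ e, boltz α (VoI T lam A Γ μ (extendSeq T g) (k : ℕ) e) ∂(ν k)

open Filter Topology Set Function

section QuadraticGrowth

variable {X E F : Type*} [TopologicalSpace X] [NormedAddCommGroup E] [NormedAddCommGroup F]

def LocallyQuadBounded (f : X → E → ℝ) : Prop :=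
  ∀ x₀, ∃ C, 0 ≤ C ∧ ∀ᶠ x in 𝓝 x₀, ∀ e, |f x e| ≤ C * (1 + ‖e‖ ^ 2)

namespace LocallyQuadBounded

variable {f g : X → E → ℝ}

lemma add (hf : LocallyQuadBounded f) (hg : LocallyQuadBounded g) :
    LocallyQuadBounded fun x e => f x e + g x e := by
  intro x₀
  obtain ⟨C, hC, hfC⟩ := hf x₀
  obtain ⟨D, hD, hgD⟩ := hg x₀
  refine ⟨C + D, add_nonneg hC hD, ?_⟩
  filter_upwards [hfC, hgD] with x hfx hgx e
  calc |f x e + g x e| ≤ |f x e| + |g x e| := abs_add_le _ _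
    _ ≤ (C + D) * (1 + ‖e‖ ^ 2) := by linarith [hfx e, hgx e]

lemma min (hf : LocallyQuadBounded f) (hg : LocallyQuadBounded g) :
    LocallyQuadBounded fun x e => min (f x e) (g x e) := by
  intro x₀
  obtain ⟨C, hC, hfC⟩ := hf x₀
  obtain ⟨D, hD, hgD⟩ := hg x₀
  refine ⟨max C D, le_max_of_le_left hC, ?_⟩
  filter_upwards [hfC, hgD] with x hfx hgx e
  refine abs_min_le_max_abs_abs.trans (max_le ?_ ?_)
  · exact (hfx e).trans (by gcongr; exact le_max_left C D)
  · exact (hgx e).trans (by gcongr; exact le_max_right C D)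

lemma comp_of_norm_le {f : X → F → ℝ} {φ : E → F} {c : ℝ} (hφ : ∀ e, ‖φ e‖ ≤ c * ‖e‖)
    (hf : LocallyQuadBounded f) : LocallyQuadBounded fun x e => f x (φ e) := by
  intro x₀
  obtain ⟨C, hC, hfC⟩ := hf x₀
  refine ⟨C * (1 + c ^ 2), by positivity, ?_⟩
  filter_upwards [hfC] with x hfx e
  have hφe : ‖φ e‖ ^ 2 ≤ c ^ 2 * ‖e‖ ^ 2 := by
    rw [← mul_pow]
    exact pow_le_pow_left₀ (norm_nonneg _) (hφ e) 2
  calc |f x (φ e)| ≤ C * (1 + ‖φ e‖ ^ 2) := hfx (φ e)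
    _ ≤ C * (1 + c ^ 2) * (1 + ‖e‖ ^ 2) := by
      rw [mul_assoc]
      gcongr
      nlinarith [sq_nonneg c, sq_nonneg ‖e‖]

end LocallyQuadBounded

lemma Continuous.locallyQuadBounded {c : X → ℝ} (hc : Continuous c) :
    LocallyQuadBounded fun x (_ : E) => c x := by
  intro x₀
  refine ⟨|c x₀| + 1, by positivity, ?_⟩
  have hnear : ∀ᶠ x in 𝓝 x₀, |c x| < |c x₀| + 1 :=
    hc.abs.continuousAt.eventually_lt continuousAt_const (lt_add_one _)
  filter_upwards [hnear] with x hx e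
  nlinarith [sq_nonneg ‖e‖, abs_nonneg (c x₀)]

lemma abs_dotProduct_le {ι : Type*} [Fintype ι] (u v : ι → ℝ) :
    |u ⬝ᵥ v| ≤ Fintype.card ι * (‖u‖ * ‖v‖) := by
  calc |u ⬝ᵥ v| ≤ ∑ i, |u i * v i| := Finset.abs_sum_le_sum_abs _ _
    _ ≤ ∑ _i : ι, ‖u‖ * ‖v‖ := by
      gcongr with i
      rw [abs_mul]
      exact mul_le_mul (norm_le_pi_norm u i) (norm_le_pi_norm v i) (abs_nonneg _) (norm_nonneg _)
    _ = Fintype.card ι * (‖u‖ * ‖v‖) := by simp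

attribute [local instance] Matrix.linftyOpNormedAddCommGroup in
lemma locallyQuadBounded_dotProduct_mulVec {ι : Type*} [Fintype ι] (M : Matrix ι ι ℝ) :
    LocallyQuadBounded fun (_ : X) (v : ι → ℝ) => v ⬝ᵥ (M *ᵥ v) := by
  intro _
  refine ⟨Fintype.card ι * ‖M‖, by positivity, Eventually.of_forall fun _ v => ?_⟩
  calc |v ⬝ᵥ (M *ᵥ v)| ≤ Fintype.card ι * (‖v‖ * (‖M‖ * ‖v‖)) := by
        grw [abs_dotProduct_le, Matrix.linfty_opNorm_mulVec]
    _ ≤ Fintype.card ι * ‖M‖ * (1 + ‖v‖ ^ 2) := by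
      nlinarith [mul_nonneg (Nat.cast_nonneg (Fintype.card ι)) (norm_nonneg M)]

lemma abs_apply_add_le_of_quad_bound {h : E → ℝ} {C : ℝ} (hC : 0 ≤ C)
    (hh : ∀ e, |h e| ≤ C * (1 + ‖e‖ ^ 2)) (e w : E) :
    |h (e + w)| ≤ C * (1 + 2 * ‖e‖ ^ 2) + 2 * C * ‖w‖ ^ 2 := by
  have hsq : ‖e + w‖ ^ 2 ≤ 2 * (‖e‖ ^ 2 + ‖w‖ ^ 2) :=
    (pow_le_pow_left₀ (norm_nonneg _) (norm_add_le e w) 2).trans add_sq_le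
  calc |h (e + w)| ≤ C * (1 + ‖e + w‖ ^ 2) := hh _
    _ ≤ C * (1 + 2 * (‖e‖ ^ 2 + ‖w‖ ^ 2)) := by gcongr
    _ = C * (1 + 2 * ‖e‖ ^ 2) + 2 * C * ‖w‖ ^ 2 := by ring

end QuadraticGrowth

section IntegralOfTranslates

variable {X E : Type*} [TopologicalSpace X] [NormedAddCommGroup E] [MeasurableSpace E]
  {μ : Measure E} [IsProbabilityMeasure μ] {f : X → E → ℝ}

lemma LocallyQuadBounded.integral_add (hmom : Integrable (fun w => ‖w‖ ^ 2) μ)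
    (hb : LocallyQuadBounded f) :
    LocallyQuadBounded fun x e => ∫ w, f x (e + w) ∂μ := by
  intro x₀
  obtain ⟨C, hC, hfC⟩ := hb x₀
  set M := ∫ w, ‖w‖ ^ 2 ∂μ
  have hM : 0 ≤ M := integral_nonneg fun _ => by positivity
  refine ⟨2 * C * (1 + M), by positivity, ?_⟩
  filter_upwards [hfC] with x hfx e
  have hint : Integrable (fun w => C * (1 + 2 * ‖e‖ ^ 2) + 2 * C * ‖w‖ ^ 2) μ :=
    (integrable_const _).add (hmom.const_mul _)
  have hle := norm_integral_le_of_norm_le (f := fun w => f x (e + w)) hint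
    (Eventually.of_forall fun w => abs_apply_add_le_of_quad_bound hC hfx e w)
  rw [MeasureTheory.integral_add (integrable_const _) (hmom.const_mul _), integral_const,
    integral_const_mul, probReal_univ, one_smul, Real.norm_eq_abs] at hle
  calc |∫ w, f x (e + w) ∂μ| ≤ C * (1 + 2 * ‖e‖ ^ 2) + 2 * C * M := hle
    _ ≤ 2 * C * (1 + M) * (1 + ‖e‖ ^ 2) := by
      nlinarith [mul_nonneg (mul_nonneg hC hM) (sq_nonneg ‖e‖)]

lemma continuous_integral_add [FirstCountableTopology X] [OpensMeasurableSpace E]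
    (hmom : Integrable (fun w => ‖w‖ ^ 2) μ) (hf : Continuous (uncurry f))
    (hb : LocallyQuadBounded f) :
    Continuous fun p : X × E => ∫ w, f p.1 (p.2 + w) ∂μ := by
  refine continuous_iff_continuousAt.2 fun ⟨x₀, e₀⟩ => ?_
  obtain ⟨C, hC, hfC⟩ := hb x₀
  set r := ‖e₀‖ + 1
  have hnear : ∀ᶠ p : X × E in 𝓝 (x₀, e₀), ‖p.2‖ < r :=
    continuous_snd.norm.continuousAt.eventually_lt continuousAt_const (lt_add_one _)
  refine continuousAt_of_dominated (bound := fun w => C * (1 + 2 * r ^ 2) + 2 * C * ‖w‖ ^ 2)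
    (Eventually.of_forall fun p => ?_) ?_ ((integrable_const _).add (hmom.const_mul _))
    (ae_of_all _ fun w => ?_)
  · exact (hf.comp (continuous_const.prodMk (continuous_const.add continuous_id)))
      |>.aestronglyMeasurable
  · filter_upwards [(continuousAt_fst.eventually hfC), hnear] with p hfp hp
    refine ae_of_all _ fun w => ?_
    refine (abs_apply_add_le_of_quad_bound hC hfp p.2 w).trans ?_
    gcongr
  · exact (hf.comp (continuous_fst.prodMk (continuous_snd.add continuous_const))).continuousAt

end IntegralOfTranslates

attribute [local instance] Matrix.linftyOpNormedAddCommGroup in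
lemma norm_smul_mulVec_le {ι : Type*} [Fintype ι] (A : Matrix ι ι ℝ) (c : ℝ) (e : ι → ℝ) :
    ‖c • (A *ᵥ e)‖ ≤ (|c| * ‖A‖) * ‖e‖ := by
  rw [norm_smul, Real.norm_eq_abs, mul_assoc]
  gcongr
  exact Matrix.linfty_opNorm_mulVec A e

section ValueFunctions

variable {n : ℕ} (T : ℕ) (lam : ℝ) (A : Matrix (Fin n) (Fin n) ℝ)
  (Γ : ℕ → Matrix (Fin n) (Fin n) ℝ) (μ : Measure (Fin n → ℝ))

lemma bellman_update_continuous_and_locallyQuadBounded [IsProbabilityMeasure μ]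
    (hmom : Integrable (fun w => ‖w‖ ^ 2) μ) {h : (ℕ → ℝ) → (Fin n → ℝ) → ℝ}
    (hc : Continuous (uncurry h)) (hb : LocallyQuadBounded h) (j : ℕ) (a : ℝ) :
    let Q := fun (g : ℕ → ℝ) (e : Fin n → ℝ) =>
      lam * g j * a + ∫ w, h g ((1 - a) • (A *ᵥ e) + w) ∂μ
    Continuous (uncurry Q) ∧ LocallyQuadBounded Q := by
  have hcost : Continuous fun g : ℕ → ℝ => lam * g j * a := by fun_prop
  constructor
  · exact (hcost.comp continuous_fst).add ((continuous_integral_add hmom hc hb).comp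
      (f := fun p : (ℕ → ℝ) × (Fin n → ℝ) => (p.1, (1 - a) • (A *ᵥ p.2))) (by fun_prop))
  · exact hcost.locallyQuadBounded.add
      ((hb.integral_add hmom).comp_of_norm_le (norm_smul_mulVec_le A (1 - a)))

lemma Qrev_continuous_and_locallyQuadBounded [IsProbabilityMeasure μ]
    (hmom : Integrable (fun w => ‖w‖ ^ 2) μ) (m : ℕ) (a : ℝ) :
    Continuous (uncurry fun g e => Qrev T lam A Γ μ g m e a) ∧
      LocallyQuadBounded fun g e => Qrev T lam A Γ μ g m e a := by
  induction m generalizing a with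
  | zero =>
    exact bellman_update_continuous_and_locallyQuadBounded lam A μ hmom (by fun_prop)
      (locallyQuadBounded_dotProduct_mulVec (Γ T)) (T - 1) a
  | succ m ih =>
    have hc : Continuous (uncurry fun g (v : Fin n → ℝ) => v ⬝ᵥ (Γ (T - (m + 1)) *ᵥ v) +
        min (Qrev T lam A Γ μ g m v 0) (Qrev T lam A Γ μ g m v 1)) :=
      (by fun_prop : Continuous fun p : (ℕ → ℝ) × (Fin n → ℝ) =>
        p.2 ⬝ᵥ (Γ (T - (m + 1)) *ᵥ p.2)).add ((ih 0).1.min (ih 1).1)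
    exact bellman_update_continuous_and_locallyQuadBounded lam A μ hmom hc
      ((locallyQuadBounded_dotProduct_mulVec _).add ((ih 0).2.min (ih 1).2)) _ a

lemma Qrev_congr {g g' : ℕ → ℝ} (m : ℕ) (h : ∀ j, T - 1 - m ≤ j → g j = g' j) :
    Qrev T lam A Γ μ g m = Qrev T lam A Γ μ g' m := by
  induction m with
  | zero => funext e a; simp only [Qrev, h (T - 1) le_rfl]
  | succ m ih =>
    funext e a
    simp only [Qrev, h (T - 1 - (m + 1)) le_rfl, ih fun j hj => h j (by omega)]

lemma continuous_extendSeq : Continuous (extendSeq T) := by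
  refine continuous_pi fun j => ?_
  unfold extendSeq
  split_ifs <;> fun_prop

lemma continuous_VoI [IsProbabilityMeasure μ] (hmom : Integrable (fun w => ‖w‖ ^ 2) μ) (k : ℕ) :
    Continuous fun p : (Fin T → ℝ) × (Fin n → ℝ) =>
      VoI T lam A Γ μ (extendSeq T p.1) k p.2 := by
  have hQ (a : ℝ) :=
    (Qrev_continuous_and_locallyQuadBounded T lam A Γ μ hmom (T - 1 - k) a).1.comp
      ((continuous_extendSeq T).prodMap continuous_id)
  exact (hQ 0).sub (hQ 1)

end ValueFunctions

lemma boltz_mem_Icc (α x : ℝ) : boltz α x ∈ Icc (0 : ℝ) 1 :=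
  ⟨by unfold boltz; positivity,
    inv_le_one_of_one_le₀ (le_add_of_nonneg_right (Real.exp_pos _).le)⟩

lemma continuous_boltz (α : ℝ) : Continuous (boltz α) :=
  Continuous.inv₀ (by fun_prop) fun _ => by positivity

section MeanFieldOperator

variable {n T : ℕ} (lam α : ℝ) (A : Matrix (Fin n) (Fin n) ℝ)
  (Γ : ℕ → Matrix (Fin n) (Fin n) ℝ) (μ : Measure (Fin n → ℝ)) (ν : Fin T → Measure (Fin n → ℝ))

lemma Tmf_mem_Icc [∀ k, IsProbabilityMeasure (ν k)] (g : Fin T → ℝ) (k : Fin T) :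
    Tmf T lam α A Γ μ ν g k ∈ Icc (0 : ℝ) 1 := by
  refine ⟨integral_nonneg fun e => (boltz_mem_Icc α _).1, ?_⟩
  calc Tmf T lam α A Γ μ ν g k ≤ ∫ _, (1 : ℝ) ∂(ν k) :=
        integral_mono_of_nonneg (ae_of_all _ fun e => (boltz_mem_Icc α _).1) (integrable_const 1)
          (ae_of_all _ fun e => (boltz_mem_Icc α _).2)
    _ = 1 := by simp

lemma Tmf_apply_congr {g g' : Fin T → ℝ} {k : Fin T} (h : ∀ j, k ≤ j → g j = g' j) :
    Tmf T lam α A Γ μ ν g k = Tmf T lam α A Γ μ ν g' k := by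
  have hext : ∀ j, T - 1 - (T - 1 - k) ≤ j → extendSeq T g j = extendSeq T g' j := by
    intro j hj
    have hk := k.isLt
    unfold extendSeq
    split_ifs with hjT
    · exact h ⟨j, hjT⟩ (Fin.le_def.2 (by simp only; omega))
    · rfl
  simp only [Tmf, VoI, Qval, Qrev_congr T lam A Γ μ _ hext]

lemma continuous_Tmf [IsProbabilityMeasure μ] (hmom : Integrable (fun w => ‖w‖ ^ 2) μ)
    [∀ k, IsProbabilityMeasure (ν k)] : Continuous (Tmf T lam α A Γ μ ν) := by
  refine continuous_pi fun k => ?_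
  have hσ := (continuous_boltz α).comp (continuous_VoI T lam A Γ μ hmom k)
  refine continuous_of_dominated (bound := fun _ => 1)
    (fun g => (hσ.comp (Continuous.prodMk_right g)).aestronglyMeasurable)
    (fun g => ae_of_all _ fun e => ?_) (integrable_const 1)
    (ae_of_all _ fun e => hσ.comp (Continuous.prodMk_left e))
  rw [Real.norm_eq_abs, abs_of_nonneg (boltz_mem_Icc α _).1]
  exact (boltz_mem_Icc α _).2

end MeanFieldOperator

theorem exists_isFixedPt_of_triangular {T : ℕ} {a b : ℝ} (hab : a ≤ b)
    {F : (Fin T → ℝ) → Fin T → ℝ} (hF : Continuous F)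
    (hmaps : ∀ g, (∀ k, g k ∈ Icc a b) → ∀ k, F g k ∈ Icc a b)
    (htri : ∀ g g' k, (∀ j, k ≤ j → g j = g' j) → F g k = F g' k) :
    ∃ g, (∀ k, g k ∈ Icc a b) ∧ IsFixedPt F g := by
  suffices key : ∀ s ≤ T, ∃ g, (∀ k, g k ∈ Icc a b) ∧ ∀ k : Fin T, s ≤ k → F g k = g k by
    obtain ⟨g, hg, hfix⟩ := key 0 T.zero_le
    exact ⟨g, hg, funext fun k => hfix k k.val.zero_le⟩
  intro s hs
  induction hs using Nat.decreasingInduction with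
  | self => exact ⟨fun _ => a, fun _ => left_mem_Icc.2 hab, fun k hk => absurd k.isLt (by omega)⟩
  | of_succ s hs ih =>
    obtain ⟨g, hg, hfix⟩ := ih
    let k₀ : Fin T := ⟨s, hs⟩
    have hupd (x : ℝ) (hx : x ∈ Icc a b) : ∀ k, update g k₀ x k ∈ Icc a b := fun k => by
      rcases eq_or_ne k k₀ with rfl | hk
      · simpa using hx
      · simpa [hk] using hg k
    obtain ⟨x, hx, hfx⟩ :=
      exists_mem_Icc_isFixedPt_of_mapsTo (f := fun x => F (update g k₀ x) k₀) (by fun_prop) hab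
        fun x hx => hmaps _ (hupd x hx) k₀
    refine ⟨update g k₀ x, hupd x hx, fun k hk => ?_⟩
    rcases hk.eq_or_lt with hk | hk
    · obtain rfl : k = k₀ := Fin.ext hk.symm
      simpa using hfx.eq
    · have hne : k ≠ k₀ := fun h => by simp [h, k₀] at hk
      rw [htri _ g k fun j hj => update_of_ne (by rintro rfl; exact absurd hj (not_le.2 hk)) x g,
        hfix k hk, update_of_ne hne]

theorem mean_field_operator_continuous_and_fixed_point_exists_general
    {n T : ℕ} (lam α : ℝ)
    (A : Matrix (Fin n) (Fin n) ℝ) (Γ : ℕ → Matrix (Fin n) (Fin n) ℝ)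
    (μ : Measure (Fin n → ℝ)) [IsProbabilityMeasure μ]
    (hmom : Integrable (fun w => ‖w‖ ^ 2) μ)
    (ν : Fin T → Measure (Fin n → ℝ)) [∀ k, IsProbabilityMeasure (ν k)] :
    Continuous (Tmf T lam α A Γ μ ν) ∧
      (∀ g : Fin T → ℝ, (∀ k, g k ∈ Set.Icc (0 : ℝ) 1) →
        ∀ k, Tmf T lam α A Γ μ ν g k ∈ Set.Icc (0 : ℝ) 1) ∧
      ∃ gs : Fin T → ℝ,
        (∀ k, gs k ∈ Set.Icc (0 : ℝ) 1) ∧ Tmf T lam α A Γ μ ν gs = gs := by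
  have hcont := continuous_Tmf lam α A Γ μ ν hmom
  have hmaps : ∀ g : Fin T → ℝ, (∀ k, g k ∈ Set.Icc (0 : ℝ) 1) →
      ∀ k, Tmf T lam α A Γ μ ν g k ∈ Set.Icc (0 : ℝ) 1 :=
    fun g _ k => Tmf_mem_Icc lam α A Γ μ ν g k
  exact ⟨hcont, hmaps, exists_isFixedPt_of_triangular zero_le_one hcont hmaps
    fun _ _ _ => Tmf_apply_congr lam α A Γ μ ν⟩

/-- For every `α > 0`, the mean-field operator `𝒯` is continuous on `ℝ^T` (sup norm),
maps the cube `[0,1]^T` into itself, and admits at least one fixed point in `[0,1]^T`. -/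
theorem mean_field_operator_continuous_and_fixed_point_exists
    {n T : ℕ} (hT : 1 ≤ T) (lam α : ℝ) (hlam : 0 < lam) (hα : 0 < α)
    (A : Matrix (Fin n) (Fin n) ℝ) (Γ : ℕ → Matrix (Fin n) (Fin n) ℝ)
    (hΓ : ∀ k, (Γ k).PosSemidef)
    (μ : Measure (Fin n → ℝ)) [IsProbabilityMeasure μ]
    (hmom : Integrable (fun w => ‖w‖ ^ 2) μ)
    (ν : Fin T → Measure (Fin n → ℝ)) [∀ k, IsProbabilityMeasure (ν k)] :
    Continuous (Tmf T lam α A Γ μ ν) ∧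
      (∀ g : Fin T → ℝ, (∀ k, g k ∈ Set.Icc (0 : ℝ) 1) →
        ∀ k, Tmf T lam α A Γ μ ν g k ∈ Set.Icc (0 : ℝ) 1) ∧
      ∃ gs : Fin T → ℝ,
        (∀ k, gs k ∈ Set.Icc (0 : ℝ) 1) ∧ Tmf T lam α A Γ μ ν gs = gs :=
  mean_field_operator_continuous_and_fixed_point_exists_general lam α A Γ μ hmom ν
end

section
/- For any two mean-field sequences g¹, g² ∈ ℝ^T, every k ∈ {0, …, T−1}, every e ∈ ℝⁿ, and every a ∈ {0,1}, the state–action value functions satisfy Q^{g¹}_k(e, a) − Q^{g²}_k(e, a) ≤ λ (T − k) · max_{0 ≤ t ≤ T−1} |g¹_t − g²_t|; in particular Q^{g¹}_k(e, a) − Q^{g²}_k(e, a) ≤ λ T · ‖g¹ − g²‖_∞. -/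
open MeasureTheory Matrix

/-! Backward induction on the time-to-go: the running cost `λ g_k a` of one stage moves by at
most `λ ‖g¹ - g²‖_∞`, the quadratic state cost is the same for both sequences, and neither `min`
nor averaging over the noise increases a uniform upper bound on a difference. Averaging needs the
integrands to be integrable (a Bochner integral of a non-integrable function is `0`); this holds
because each `Q_k(·, a)` is measurable with at most quadratic growth and `μ` has a finite second
moment. -/

open Asymptotics Filter

lemma Asymptotics.IsBigO.min {α : Type*} {l : Filter α} {f₁ f₂ g : α → ℝ}
    (h₁ : f₁ =O[l] g) (h₂ : f₂ =O[l] g) : (fun x => min (f₁ x) (f₂ x)) =O[l] g := by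
  refine (isBigO_of_le _ fun x => ?_).trans (h₁.norm_left.add h₂.norm_left)
  simp only [Real.norm_eq_abs, abs_of_nonneg (add_nonneg (abs_nonneg (f₁ x)) (abs_nonneg (f₂ x)))]
  exact abs_min_le_max_abs_abs.trans (max_le_add_of_nonneg (abs_nonneg _) (abs_nonneg _))

section QuadraticGrowth

variable {E : Type*} [NormedAddCommGroup E]

lemma norm_add_sq_le (v w : E) : ‖v + w‖ ^ 2 ≤ 2 * ‖v‖ ^ 2 + 2 * ‖w‖ ^ 2 := by
  nlinarith [norm_add_le v w, norm_nonneg (v + w), sq_nonneg (‖v‖ - ‖w‖)]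

lemma norm_one_add_sq (x : E) : ‖1 + ‖x‖ ^ 2‖ = 1 + ‖x‖ ^ 2 :=
  Real.norm_of_nonneg (by positivity)

lemma isBigO_const_one_add_sq (c : ℝ) : (fun _ : E => c) =O[⊤] fun x => 1 + ‖x‖ ^ 2 :=
  (isBigO_const_one ℝ c ⊤).trans <| isBigO_of_le _ fun x => by
    rw [norm_one, norm_one_add_sq]; nlinarith [sq_nonneg ‖x‖]

lemma isBigO_mul_self_one_add_sq : (fun x : E => ‖x‖ * ‖x‖) =O[⊤] fun x => 1 + ‖x‖ ^ 2 :=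
  isBigO_of_le _ fun x => by
    rw [norm_one_add_sq, Real.norm_of_nonneg (by positivity)]; nlinarith

lemma isBigO_one_add_sq_comp {F : Type*} [NormedAddCommGroup F] {f : E → F} {K : ℝ}
    (hf : ∀ x, ‖f x‖ ≤ K * ‖x‖) :
    (fun x => 1 + ‖f x‖ ^ 2) =O[⊤] fun x => 1 + ‖x‖ ^ 2 := by
  refine (isBigOWith_top.2 fun x => ?_ : IsBigOWith (1 + K ^ 2) _ _ _).isBigO
  rw [norm_one_add_sq, norm_one_add_sq]
  have : ‖f x‖ ^ 2 ≤ K ^ 2 * ‖x‖ ^ 2 := by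
    rw [← mul_pow]; exact pow_le_pow_left₀ (norm_nonneg _) (hf x) 2
  nlinarith [sq_nonneg K, sq_nonneg ‖x‖]

lemma norm_comp_add_le {F : E → ℝ} {C : ℝ} (hC : 0 ≤ C)
    (hF : IsBigOWith C ⊤ F fun x => 1 + ‖x‖ ^ 2) (v w : E) :
    ‖F (v + w)‖ ≤ C * (1 + 2 * ‖v‖ ^ 2) + 2 * C * ‖w‖ ^ 2 := by
  have := isBigOWith_top.1 hF (v + w)
  rw [norm_one_add_sq] at this
  nlinarith [norm_add_sq_le v w]

variable [MeasurableSpace E] {μ : Measure E} {F : E → ℝ}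

lemma integrable_comp_add [MeasurableAdd E] [IsFiniteMeasure μ]
    (hmom : Integrable (fun w => ‖w‖ ^ 2) μ) (hFm : Measurable F)
    (hF : F =O[⊤] fun x => 1 + ‖x‖ ^ 2) (v : E) :
    Integrable (fun w => F (v + w)) μ := by
  obtain ⟨C, hC, hFC⟩ := hF.exists_nonneg
  exact ((integrable_const _).add (hmom.const_mul _)).mono'
    (hFm.comp (measurable_const_add v)).aestronglyMeasurable
    (ae_of_all _ (norm_comp_add_le hC hFC v))

lemma isBigO_integral_comp_add [IsProbabilityMeasure μ]
    (hmom : Integrable (fun w => ‖w‖ ^ 2) μ) (hF : F =O[⊤] fun x => 1 + ‖x‖ ^ 2) :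
    (fun v => ∫ w, F (v + w) ∂μ) =O[⊤] fun v => 1 + ‖v‖ ^ 2 := by
  obtain ⟨C, hC, hFC⟩ := hF.exists_nonneg
  set m₂ := ∫ w, ‖w‖ ^ 2 ∂μ
  have hm₂ : 0 ≤ m₂ := integral_nonneg fun w => by positivity
  refine (isBigOWith_top.2 fun v => ?_ : IsBigOWith (C * (2 + 2 * m₂)) _ _ _).isBigO
  have hint := norm_integral_le_of_norm_le
    (g := fun w => C * (1 + 2 * ‖v‖ ^ 2) + 2 * C * ‖w‖ ^ 2)
    ((integrable_const _).add (hmom.const_mul _))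
    (ae_of_all μ (norm_comp_add_le hC hFC v))
  rw [integral_add (integrable_const _) (hmom.const_mul _), integral_const,
    integral_const_mul, probReal_univ, one_smul] at hint
  rw [norm_one_add_sq]
  nlinarith [mul_nonneg hC hm₂, mul_nonneg (mul_nonneg hC hm₂) (sq_nonneg ‖v‖)]

lemma measurable_integral_comp_add [MeasurableAdd₂ E] [SFinite μ] (hF : Measurable F) :
    Measurable fun v => ∫ w, F (v + w) ∂μ :=
  (hF.comp measurable_add).stronglyMeasurable.integral_prod_right'.measurable

end QuadraticGrowth

lemma integral_sub_integral_le {α : Type*} [MeasurableSpace α] {μ : Measure α}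
    [IsProbabilityMeasure μ] {f₁ f₂ : α → ℝ} (h₁ : Integrable f₁ μ) (h₂ : Integrable f₂ μ)
    {K : ℝ} (h : ∀ x, f₁ x - f₂ x ≤ K) : ∫ x, f₁ x ∂μ - ∫ x, f₂ x ∂μ ≤ K := by
  rw [← integral_sub h₁ h₂]
  exact (integral_mono (h₁.sub h₂) (integrable_const K) h).trans_eq (by simp)

lemma min_sub_min_le_of_sub_le {α : Type*} [AddCommGroup α] [LinearOrder α]
    [IsOrderedAddMonoid α] {p₁ q₁ p₂ q₂ K : α} (hp : p₁ - p₂ ≤ K) (hq : q₁ - q₂ ≤ K) :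
    min p₁ q₁ - min p₂ q₂ ≤ K := by
  rw [sub_le_iff_le_add, ← min_add_add_left]
  exact min_le_min (sub_le_iff_le_add.1 hp) (sub_le_iff_le_add.1 hq)

lemma mul_mul_sub_mul_mul_le_of_abs_sub_le {lam x₁ x₂ M a : ℝ} (hlam : 0 ≤ lam) (hx : |x₁ - x₂| ≤ M)
    (ha : a ∈ Set.Icc (0 : ℝ) 1) : lam * x₁ * a - lam * x₂ * a ≤ lam * M := by
  have : (x₁ - x₂) * a ≤ M := by
    nlinarith [le_abs_self (x₁ - x₂), abs_nonneg (x₁ - x₂), ha.1, ha.2]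
  calc lam * x₁ * a - lam * x₂ * a = lam * ((x₁ - x₂) * a) := by ring
    _ ≤ lam * M := mul_le_mul_of_nonneg_left this hlam

section MatrixGrowth

variable {n : ℕ}

lemma isBigO_dotProduct_mulVec (M : Matrix (Fin n) (Fin n) ℝ) :
    (fun x : Fin n → ℝ => x ⬝ᵥ (M *ᵥ x)) =O[⊤] fun x => 1 + ‖x‖ ^ 2 := by
  have hcoord : ∀ i, (fun x : Fin n → ℝ => x i) =O[⊤] fun x => ‖x‖ :=
    fun i => isBigO_of_le _ fun x => by simpa using norm_le_pi_norm x i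
  have hMx : (fun x => M *ᵥ x) =O[⊤] fun x => x :=
    (Matrix.mulVecLin M).toContinuousLinearMap.isBigO_id ⊤
  have hMcoord : ∀ i, (fun x => (M *ᵥ x) i) =O[⊤] fun x => ‖x‖ :=
    fun i => ((hcoord i).comp_tendsto (k := fun x => M *ᵥ x) tendsto_top).trans hMx.norm_norm
  exact (IsBigO.fun_sum fun i _ => (hcoord i).mul (hMcoord i)).trans isBigO_mul_self_one_add_sq

variable {μ : Measure (Fin n → ℝ)} [IsProbabilityMeasure μ]

lemma isBigO_integral_comp_smul_mulVec_add (hmom : Integrable (fun w => ‖w‖ ^ 2) μ)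
    {F : (Fin n → ℝ) → ℝ} (hF : F =O[⊤] fun x => 1 + ‖x‖ ^ 2)
    (A : Matrix (Fin n) (Fin n) ℝ) (a : ℝ) :
    (fun e => ∫ w, F ((1 - a) • (A *ᵥ e) + w) ∂μ) =O[⊤] fun e => 1 + ‖e‖ ^ 2 := by
  let L := (1 - a) • (Matrix.mulVecLin A).toContinuousLinearMap
  exact ((isBigO_integral_comp_add hmom hF).comp_tendsto tendsto_top).trans
    (isBigO_one_add_sq_comp (f := fun e => (1 - a) • (A *ᵥ e)) fun e => by
      simpa [L] using L.le_opNorm e)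

end MatrixGrowth

section Qrev

variable {n : ℕ} (T : ℕ) (lam : ℝ) (A : Matrix (Fin n) (Fin n) ℝ)
  (Γ : ℕ → Matrix (Fin n) (Fin n) ℝ) (μ : Measure (Fin n → ℝ))

theorem measurable_Qrev [SFinite μ] (g : ℕ → ℝ) :
    ∀ m a, Measurable fun e => Qrev T lam A Γ μ g m e a
  | 0, a => by
    simp only [Qrev]
    exact measurable_const.add
      ((measurable_integral_comp_add (by fun_prop : Measurable fun x => x ⬝ᵥ (Γ T *ᵥ x))).comp
        (by fun_prop))
  | m + 1, a => by
    simp only [Qrev]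
    exact measurable_const.add ((measurable_integral_comp_add
      ((by fun_prop : Measurable fun x => x ⬝ᵥ (Γ (T - (m + 1)) *ᵥ x)).add
        ((measurable_Qrev g m 0).min (measurable_Qrev g m 1)))).comp (by fun_prop))

variable [IsProbabilityMeasure μ] {μ}

theorem Qrev_isBigO (hmom : Integrable (fun w => ‖w‖ ^ 2) μ) (g : ℕ → ℝ) :
    ∀ m a, (fun e => Qrev T lam A Γ μ g m e a) =O[⊤] fun e => 1 + ‖e‖ ^ 2
  | 0, a => (isBigO_const_one_add_sq _).add
      (isBigO_integral_comp_smul_mulVec_add hmom (isBigO_dotProduct_mulVec (Γ T)) A a)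
  | m + 1, a => (isBigO_const_one_add_sq _).add
      (isBigO_integral_comp_smul_mulVec_add hmom ((isBigO_dotProduct_mulVec _).add
        ((Qrev_isBigO hmom g m 0).min (Qrev_isBigO hmom g m 1))) A a)

theorem integrable_Qrev_integrand (hmom : Integrable (fun w => ‖w‖ ^ 2) μ) (g : ℕ → ℝ)
    (m j : ℕ) (v : Fin n → ℝ) :
    Integrable (fun w => (v + w) ⬝ᵥ (Γ j *ᵥ (v + w)) +
      min (Qrev T lam A Γ μ g m (v + w) 0) (Qrev T lam A Γ μ g m (v + w) 1)) μ :=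
  integrable_comp_add hmom
    ((by fun_prop : Measurable fun x => x ⬝ᵥ (Γ j *ᵥ x)).add
      ((measurable_Qrev T lam A Γ μ g m 0).min (measurable_Qrev T lam A Γ μ g m 1)))
    ((isBigO_dotProduct_mulVec _).add
      ((Qrev_isBigO T lam A Γ hmom g m 0).min (Qrev_isBigO T lam A Γ hmom g m 1))) v

theorem Qrev_sub_le (hlam : 0 ≤ lam) (hmom : Integrable (fun w => ‖w‖ ^ 2) μ)
    {g₁ g₂ : ℕ → ℝ} {M : ℝ} (hM : ∀ j, |g₁ j - g₂ j| ≤ M) (m : ℕ) {e : Fin n → ℝ} {a : ℝ}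
    (ha : a ∈ Set.Icc (0 : ℝ) 1) :
    Qrev T lam A Γ μ g₁ m e a - Qrev T lam A Γ μ g₂ m e a ≤ lam * (m + 1) * M := by
  induction m generalizing e a with
  | zero =>
    simp only [Qrev]
    have := mul_mul_sub_mul_mul_le_of_abs_sub_le hlam (hM (T - 1)) ha
    push_cast
    linarith
  | succ m ih =>
    simp only [Qrev]
    have hcost := mul_mul_sub_mul_mul_le_of_abs_sub_le hlam (hM (T - 1 - (m + 1))) ha
    have hnext := integral_sub_integral_le (K := lam * (m + 1) * M)
      (integrable_Qrev_integrand T lam A Γ hmom g₁ m (T - (m + 1)) ((1 - a) • (A *ᵥ e)))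
      (integrable_Qrev_integrand T lam A Γ hmom g₂ m (T - (m + 1)) ((1 - a) • (A *ᵥ e)))
      fun w => by
        have := min_sub_min_le_of_sub_le
          (ih (e := (1 - a) • (A *ᵥ e) + w) (Set.left_mem_Icc.2 zero_le_one))
          (ih (e := (1 - a) • (A *ᵥ e) + w) (Set.right_mem_Icc.2 zero_le_one))
        linarith
    push_cast at hnext ⊢
    linarith

theorem Qval_sub_le (hlam : 0 ≤ lam) (hmom : Integrable (fun w => ‖w‖ ^ 2) μ)
    {g₁ g₂ : ℕ → ℝ} {M : ℝ} (hM : ∀ j, |g₁ j - g₂ j| ≤ M) {k : ℕ} (hk : k < T)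
    (e : Fin n → ℝ) {a : ℝ} (ha : a ∈ Set.Icc (0 : ℝ) 1) :
    Qval T lam A Γ μ g₁ k e a - Qval T lam A Γ μ g₂ k e a ≤ lam * ((T : ℝ) - k) * M := by
  have hsteps : ((T - 1 - k : ℕ) : ℝ) + 1 = T - k := by
    rw [← Nat.cast_add_one, show T - 1 - k + 1 = T - k by omega, Nat.cast_sub hk.le]
  simpa only [Qval, hsteps] using Qrev_sub_le T lam A Γ hlam hmom hM (T - 1 - k) ha

end Qrev

lemma abs_extendSeq_sub_le_iSup {T : ℕ} (g₁ g₂ : Fin T → ℝ) (j : ℕ) :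
    |extendSeq T g₁ j - extendSeq T g₂ j| ≤ ⨆ t, |g₁ t - g₂ t| := by
  unfold extendSeq
  split_ifs with hj
  · exact le_ciSup (Finite.bddAbove_range fun t => |g₁ t - g₂ t|) ⟨j, hj⟩
  · simpa using Real.iSup_nonneg fun t => abs_nonneg (g₁ t - g₂ t)

theorem Q_lipschitz_in_mean_field_general
    {n T : ℕ} (lam : ℝ) (hlam : 0 < lam)
    (A : Matrix (Fin n) (Fin n) ℝ) (Γ : ℕ → Matrix (Fin n) (Fin n) ℝ)
    (μ : Measure (Fin n → ℝ)) [IsProbabilityMeasure μ]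
    (hmom : Integrable (fun w => ‖w‖ ^ 2) μ)
    (g₁ g₂ : Fin T → ℝ) (k : ℕ) (hk : k < T) (e : Fin n → ℝ)
    (a : ℝ) (ha : a = 0 ∨ a = 1) :
    Qval T lam A Γ μ (extendSeq T g₁) k e a - Qval T lam A Γ μ (extendSeq T g₂) k e a ≤
        lam * ((T : ℝ) - (k : ℝ)) * (⨆ t : Fin T, |g₁ t - g₂ t|) ∧
      Qval T lam A Γ μ (extendSeq T g₁) k e a - Qval T lam A Γ μ (extendSeq T g₂) k e a ≤
        lam * (T : ℝ) * ‖g₁ - g₂‖ := by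
  have ha' : a ∈ Set.Icc (0 : ℝ) 1 := by rcases ha with rfl | rfl <;> simp
  have hdiff := Qval_sub_le T lam A Γ hlam.le hmom (abs_extendSeq_sub_le_iSup g₁ g₂) hk e ha'
  refine ⟨hdiff, hdiff.trans ?_⟩
  have hsup : (⨆ t, |g₁ t - g₂ t|) ≤ ‖g₁ - g₂‖ :=
    Real.iSup_le (fun t => norm_le_pi_norm (g₁ - g₂) t) (norm_nonneg _)
  gcongr
  · exact Real.iSup_nonneg fun t => abs_nonneg _
  · exact sub_le_self _ k.cast_nonneg

/-- For any two mean-field sequences `g¹, g² ∈ ℝ^T`, the state–action value functions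
satisfy `Q^{g¹}_k(e,a) − Q^{g²}_k(e,a) ≤ λ(T−k)·max_t |g¹_t − g²_t|`, and in particular
`Q^{g¹}_k(e,a) − Q^{g²}_k(e,a) ≤ λT·‖g¹ − g²‖_∞`. -/
theorem Q_lipschitz_in_mean_field
    {n T : ℕ} (hT : 1 ≤ T) (lam : ℝ) (hlam : 0 < lam)
    (A : Matrix (Fin n) (Fin n) ℝ) (Γ : ℕ → Matrix (Fin n) (Fin n) ℝ)
    (hΓ : ∀ k, (Γ k).PosSemidef)
    (μ : Measure (Fin n → ℝ)) [IsProbabilityMeasure μ]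
    (hmom : Integrable (fun w => ‖w‖ ^ 2) μ)
    (g₁ g₂ : Fin T → ℝ) (k : ℕ) (hk : k < T) (e : Fin n → ℝ)
    (a : ℝ) (ha : a = 0 ∨ a = 1) :
    Qval T lam A Γ μ (extendSeq T g₁) k e a - Qval T lam A Γ μ (extendSeq T g₂) k e a ≤
        lam * ((T : ℝ) - (k : ℝ)) * (⨆ t : Fin T, |g₁ t - g₂ t|) ∧
      Qval T lam A Γ μ (extendSeq T g₁) k e a - Qval T lam A Γ μ (extendSeq T g₂) k e a ≤
        lam * (T : ℝ) * ‖g₁ - g₂‖ :=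
  Q_lipschitz_in_mean_field_general lam hlam A Γ μ hmom g₁ g₂ k hk e a ha
end
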